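/- arXiv:1902.07847 — 5 statements merged into one kernel-verified Lean document; each statement's English description precedes it below -/
import Mathlib

section
/- Let Υ₁ and Υ₂ be independent random variables with α-μ power densities with parameters (α₁, μ₁, β₁) and (α₂, μ₂, β₂), and let k = α₁/α₂ ≤ 1. Then the density of X = Υ₁/Υ₂ admits the series representation f_X(x) = [α₁ x^(α₁μ₁/2 − 1) β₂^(α₁μ₁/2) / (2 β₁^(α₁μ₁/2) Γ(μ₁) Γ(μ₂))] · Σ_{h=0}^∞ (−1)^h z^h Γ(k(h+μ₁)+μ₂) / h!, with z = (xβ₂/β₁)^(α₁/2), convergent for all x > 0 when k < 1 (and for z < 1 when k = 1). -/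
/-!
Substituting the two α-μ densities, `y f₁(x y) f₂(y)` is a constant times
`y ^ q * exp (-b y ^ p) * exp (-w y ^ r)` with `p = α₂/2`, `r = α₁/2`, `b = β₂ ^ (-p)` and
`w = (x/β₁) ^ r`. Expanding the last exponential in its Taylor series and integrating term by term
with `∫ y ^ s exp (-b y ^ p) = b ^ (-(s+1)/p) Γ((s+1)/p) / p` yields the series. Term-by-term
integration is dominated convergence with majorant `y ^ q * exp (-b y ^ p) * exp (w y ^ r)`, which
is integrable when `r < p` (i.e. `k < 1`), or `r = p` and `w < b` (i.e. `k = 1` and `z < 1`).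
-/

open MeasureTheory Real Set
open scoped Nat

/-- The α-μ power (squared-envelope / SNR) density. -/
noncomputable def alphaMuPowerPDF (α μ β γ : ℝ) : ℝ :=
  α / 2 * γ ^ (α * μ / 2 - 1) / (β ^ (α * μ / 2) * Real.Gamma μ) *
    Real.exp (-((γ / β) ^ (α / 2)))

theorem hasSum_pow_div_factorial_mul_rpow {y : ℝ} (hy : 0 < y) (u q r : ℝ) :
    HasSum (fun n : ℕ => u ^ n / n ! * y ^ (q + r * n)) (y ^ q * exp (u * y ^ r)) := by
  have := (NormedSpace.expSeries_div_hasSum_exp (u * y ^ r)).mul_left (y ^ q)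
  rw [← Real.exp_eq_exp_ℝ] at this
  refine this.congr_fun fun n => ?_
  rw [mul_pow, rpow_add hy, rpow_mul hy.le, rpow_natCast]
  ring

theorem exists_mul_rpow_le_add_mul_rpow {r p : ℝ} (hr : 0 ≤ r) (hrp : r < p) (u : ℝ) {c : ℝ}
    (hc : 0 < c) : ∃ M, ∀ y, 0 ≤ y → u * y ^ r ≤ M + c * y ^ p := by
  -- beyond `Y` the term `c * y ^ p` alone dominates, below it `u * y ^ r` is bounded
  set Y := (|u| / c) ^ (p - r)⁻¹
  have hY : 0 ≤ Y := by positivity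
  refine ⟨|u| * Y ^ r, fun y hy => ?_⟩
  have hu : u * y ^ r ≤ |u| * y ^ r := mul_le_mul_of_nonneg_right (le_abs_self u) (by positivity)
  rcases le_total y Y with hyY | hYy
  · have : |u| * y ^ r ≤ |u| * Y ^ r := by gcongr
    have : 0 ≤ c * y ^ p := by positivity
    linarith
  · have hYpow : |u| / c ≤ y ^ (p - r) := by
      calc |u| / c = Y ^ (p - r) := by
            rw [← rpow_mul (by positivity), inv_mul_cancel₀ (by linarith), rpow_one]
        _ ≤ y ^ (p - r) := by gcongr
    have hsplit : y ^ p = y ^ (p - r) * y ^ r := by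
      rw [← rpow_add' hy (by linarith), sub_add_cancel]
    calc u * y ^ r ≤ c * (|u| / c) * y ^ r := by rwa [mul_div_cancel₀ _ hc.ne']
      _ ≤ c * y ^ (p - r) * y ^ r := by gcongr
      _ = c * y ^ p := by rw [hsplit, mul_assoc]
      _ ≤ |u| * Y ^ r + c * y ^ p := le_add_of_nonneg_left (by positivity)

theorem integrableOn_rpow_mul_exp_neg_mul_rpow_mul_exp {p q r b u : ℝ} (hp : 0 < p) (hq : -1 < q)
    (hr : 0 ≤ r) (hb : 0 < b) (hdom : r < p ∨ r = p ∧ u < b) :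
    IntegrableOn (fun y : ℝ => y ^ q * exp (-b * y ^ p) * exp (u * y ^ r)) (Ioi 0) := by
  obtain ⟨c, hc, M, hM⟩ : ∃ c > 0, ∃ M, ∀ y, 0 ≤ y → -b * y ^ p + u * y ^ r ≤ M + -c * y ^ p := by
    rcases hdom with hrp | ⟨rfl, hub⟩
    · obtain ⟨M, hM⟩ := exists_mul_rpow_le_add_mul_rpow hr hrp u (half_pos hb)
      exact ⟨b / 2, half_pos hb, M, fun y hy => by linarith [hM y hy]⟩
    · exact ⟨b - u, sub_pos.2 hub, 0, fun y _ => le_of_eq (by ring)⟩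
  refine ((integrableOn_rpow_mul_exp_neg_mul_rpow hq hp hc).const_mul (exp M)).mono'
    (by fun_prop) ?_
  filter_upwards [ae_restrict_mem measurableSet_Ioi] with y (hy : 0 < y)
  rw [norm_of_nonneg (by positivity), mul_assoc, ← exp_add, mul_left_comm, ← exp_add]
  exact mul_le_mul_of_nonneg_left (exp_le_exp.2 (hM y hy.le)) (by positivity)

theorem hasSum_integral_rpow_mul_exp_neg_mul_rpow_mul_exp {p q r b u : ℝ} (hp : 0 < p)
    (hq : -1 < q) (hr : 0 ≤ r) (hb : 0 < b)
    (hint : IntegrableOn (fun y : ℝ => y ^ q * exp (-b * y ^ p) * exp (|u| * y ^ r)) (Ioi 0)) :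
    HasSum (fun n : ℕ => u ^ n / n ! *
        (b ^ (-(q + r * n + 1) / p) * (1 / p) * Gamma ((q + r * n + 1) / p)))
      (∫ y in Ioi 0, y ^ q * exp (-b * y ^ p) * exp (u * y ^ r)) := by
  have hseries (v y : ℝ) (hy : y ∈ Ioi 0) :
      HasSum (fun n : ℕ => v ^ n / n ! * (y ^ (q + r * n) * exp (-b * y ^ p)))
        (y ^ q * exp (-b * y ^ p) * exp (v * y ^ r)) := by
    have h := (hasSum_pow_div_factorial_mul_rpow hy v q r).mul_right (exp (-b * y ^ p))
    rw [mul_right_comm (y ^ q)] at h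
    exact h.congr_fun fun n => by ring
  have hterm (n : ℕ) : ∫ y in Ioi 0, u ^ n / n ! * (y ^ (q + r * n) * exp (-b * y ^ p)) =
      u ^ n / n ! * (b ^ (-(q + r * n + 1) / p) * (1 / p) * Gamma ((q + r * n + 1) / p)) := by
    have hqn : -1 < q + r * n := by nlinarith [mul_nonneg hr n.cast_nonneg]
    rw [integral_const_mul, integral_rpow_mul_exp_neg_mul_rpow hp hqn hb]
  refine (hasSum_integral_of_dominated_convergence
    (fun n y => |u| ^ n / n ! * (y ^ (q + r * n) * exp (-b * y ^ p)))
    (fun n => by fun_prop) (fun n => ?_) ?_ ?_ ?_).congr_fun fun n => (hterm n).symm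
  · filter_upwards [ae_restrict_mem measurableSet_Ioi] with y (hy : 0 < y)
    rw [norm_mul, norm_div, norm_pow, Real.norm_eq_abs, RCLike.norm_natCast,
      norm_of_nonneg (by positivity)]
  · filter_upwards [ae_restrict_mem measurableSet_Ioi] with y hy
    exact (hseries |u| y hy).summable
  · exact hint.congr_fun (fun y hy => (hseries |u| y hy).tsum_eq.symm) measurableSet_Ioi
  · filter_upwards [ae_restrict_mem measurableSet_Ioi] with y hy
    exact hseries u y hy

theorem mul_alphaMuPowerPDF_mul_alphaMuPowerPDF {α₁ μ₁ β₁ α₂ μ₂ β₂ x y : ℝ} (hβ₁ : 0 < β₁)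
    (hβ₂ : 0 < β₂) (hx : 0 < x) (hy : 0 < y) :
    y * alphaMuPowerPDF α₁ μ₁ β₁ (x * y) * alphaMuPowerPDF α₂ μ₂ β₂ y =
      α₁ / 2 * (α₂ / 2) * x ^ (α₁ * μ₁ / 2 - 1) /
          (β₁ ^ (α₁ * μ₁ / 2) * Gamma μ₁ * β₂ ^ (α₂ * μ₂ / 2) * Gamma μ₂) *
        (y ^ (α₁ * μ₁ / 2 + α₂ * μ₂ / 2 - 1) * exp (-β₂ ^ (-(α₂ / 2)) * y ^ (α₂ / 2)) *
          exp (-(x / β₁) ^ (α₁ / 2) * y ^ (α₁ / 2))) := by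
  have h₁ : -((x * y / β₁) ^ (α₁ / 2)) = -(x / β₁) ^ (α₁ / 2) * y ^ (α₁ / 2) := by
    rw [mul_div_right_comm, mul_rpow (by positivity) hy.le, neg_mul]
  have h₂ : -((y / β₂) ^ (α₂ / 2)) = -β₂ ^ (-(α₂ / 2)) * y ^ (α₂ / 2) := by
    rw [div_rpow hy.le hβ₂.le, rpow_neg hβ₂.le, div_eq_inv_mul, neg_mul]
  have hy_pow : y ^ (α₁ * μ₁ / 2 + α₂ * μ₂ / 2 - 1) =
      y * y ^ (α₁ * μ₁ / 2 - 1) * y ^ (α₂ * μ₂ / 2 - 1) := by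
    rw [show α₁ * μ₁ / 2 + α₂ * μ₂ / 2 - 1 = 1 + (α₁ * μ₁ / 2 - 1) + (α₂ * μ₂ / 2 - 1) by ring,
      rpow_add hy, rpow_add hy, rpow_one]
  unfold alphaMuPowerPDF
  rw [h₁, h₂, hy_pow, mul_rpow hx.le hy.le]
  ring

theorem ratio_exponent_dominance {α₁ β₁ α₂ β₂ x : ℝ} (hβ₁ : 0 < β₁) (hα₂ : 0 < α₂)
    (hβ₂ : 0 < β₂) (hx : 0 < x) (hk1 : α₁ / α₂ ≤ 1)
    (hz1 : α₁ / α₂ = 1 → (x * β₂ / β₁) ^ (α₁ / 2) < 1) :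
    α₁ / 2 < α₂ / 2 ∨ α₁ / 2 = α₂ / 2 ∧ |-(x / β₁) ^ (α₁ / 2)| < β₂ ^ (-(α₂ / 2)) := by
  rcases hk1.lt_or_eq with hlt | heq
  · left
    linarith [(div_lt_one hα₂).1 hlt]
  · have hα : α₁ = α₂ := (div_eq_one_iff_eq hα₂.ne').1 heq
    subst hα
    refine Or.inr ⟨rfl, ?_⟩
    rw [abs_neg, abs_of_pos (by positivity)]
    refine lt_of_mul_lt_mul_right ?_ (rpow_nonneg hβ₂.le (α₁ / 2))
    rw [← rpow_add hβ₂, neg_add_cancel, rpow_zero, ← mul_rpow (by positivity) hβ₂.le,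
      div_mul_eq_mul_div]
    exact hz1 heq

theorem ratio_series_term_eq {α₁ μ₁ β₁ α₂ μ₂ β₂ x : ℝ} (hβ₁ : 0 < β₁) (hα₂ : 0 < α₂)
    (hβ₂ : 0 < β₂) (hx : 0 < x) (n : ℕ) :
    α₁ / 2 * (α₂ / 2) * x ^ (α₁ * μ₁ / 2 - 1) /
        (β₁ ^ (α₁ * μ₁ / 2) * Gamma μ₁ * β₂ ^ (α₂ * μ₂ / 2) * Gamma μ₂) *
      ((-(x / β₁) ^ (α₁ / 2)) ^ n / n ! *
        ((β₂ ^ (-(α₂ / 2))) ^ (-(α₁ * μ₁ / 2 + α₂ * μ₂ / 2 - 1 + α₁ / 2 * n + 1) / (α₂ / 2)) *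
          (1 / (α₂ / 2)) * Gamma ((α₁ * μ₁ / 2 + α₂ * μ₂ / 2 - 1 + α₁ / 2 * n + 1) / (α₂ / 2)))) =
      α₁ * x ^ (α₁ * μ₁ / 2 - 1) * β₂ ^ (α₁ * μ₁ / 2) /
          (2 * β₁ ^ (α₁ * μ₁ / 2) * Gamma μ₁ * Gamma μ₂) *
        ((-1) ^ n * ((x * β₂ / β₁) ^ (α₁ / 2)) ^ n * Gamma (α₁ / α₂ * (n + μ₁) + μ₂) / n !) := by
  have hΓ : (α₁ * μ₁ / 2 + α₂ * μ₂ / 2 - 1 + α₁ / 2 * n + 1) / (α₂ / 2) =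
      α₁ / α₂ * (n + μ₁) + μ₂ := by
    field_simp; ring
  have hb : (β₂ ^ (-(α₂ / 2))) ^ (-(α₁ * μ₁ / 2 + α₂ * μ₂ / 2 - 1 + α₁ / 2 * n + 1) / (α₂ / 2)) =
      β₂ ^ (α₁ * μ₁ / 2) * β₂ ^ (α₂ * μ₂ / 2) * (β₂ ^ (α₁ / 2)) ^ n := by
    rw [← rpow_mul hβ₂.le, ← rpow_natCast, ← rpow_mul hβ₂.le, ← rpow_add hβ₂, ← rpow_add hβ₂]
    congr 1
    field_simp
    ring
  have hz : (x * β₂ / β₁) ^ (α₁ / 2) = (x / β₁) ^ (α₁ / 2) * β₂ ^ (α₁ / 2) := by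
    rw [mul_div_right_comm, mul_rpow (by positivity) hβ₂.le]
  rw [hΓ, hb, hz, neg_pow, mul_pow]
  field_simp

theorem ratio_density_series
    (α₁ μ₁ β₁ α₂ μ₂ β₂ : ℝ)
    (hα₁ : 0 < α₁) (hμ₁ : 0 < μ₁) (hβ₁ : 0 < β₁)
    (hα₂ : 0 < α₂) (hμ₂ : 0 < μ₂) (hβ₂ : 0 < β₂)
    (k : ℝ) (hk : k = α₁ / α₂) (hk1 : k ≤ 1)
    (x : ℝ) (hx : 0 < x)
    (z : ℝ) (hz : z = (x * β₂ / β₁) ^ (α₁ / 2))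
    (hz1 : k = 1 → z < 1) :
    Summable (fun h : ℕ =>
      (-1 : ℝ) ^ h * z ^ h * Real.Gamma (k * (h + μ₁) + μ₂) / h.factorial) ∧
    (∫ y in Ioi (0:ℝ),
        y * alphaMuPowerPDF α₁ μ₁ β₁ (x * y) * alphaMuPowerPDF α₂ μ₂ β₂ y) =
      α₁ * x ^ (α₁ * μ₁ / 2 - 1) * β₂ ^ (α₁ * μ₁ / 2) /
        (2 * β₁ ^ (α₁ * μ₁ / 2) * Real.Gamma μ₁ * Real.Gamma μ₂) *
      ∑' h : ℕ,
        (-1 : ℝ) ^ h * z ^ h * Real.Gamma (k * (h + μ₁) + μ₂) / h.factorial := by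
  subst hk hz
  have hq : -1 < α₁ * μ₁ / 2 + α₂ * μ₂ / 2 - 1 := by nlinarith
  have hint := integrableOn_rpow_mul_exp_neg_mul_rpow_mul_exp (by positivity) hq (by positivity)
    (by positivity) (ratio_exponent_dominance hβ₁ hα₂ hβ₂ hx hk1 hz1)
  have hsum := (hasSum_integral_rpow_mul_exp_neg_mul_rpow_mul_exp (by positivity) hq
    (by positivity) (by positivity) hint).mul_left
    (α₁ / 2 * (α₂ / 2) * x ^ (α₁ * μ₁ / 2 - 1) /
      (β₁ ^ (α₁ * μ₁ / 2) * Gamma μ₁ * β₂ ^ (α₂ * μ₂ / 2) * Gamma μ₂))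
  rw [← integral_const_mul, setIntegral_congr_fun measurableSet_Ioi fun y hy =>
    (mul_alphaMuPowerPDF_mul_alphaMuPowerPDF hβ₁ hβ₂ hx hy).symm] at hsum
  have hK : α₁ * x ^ (α₁ * μ₁ / 2 - 1) * β₂ ^ (α₁ * μ₁ / 2) /
      (2 * β₁ ^ (α₁ * μ₁ / 2) * Gamma μ₁ * Gamma μ₂) ≠ 0 := by
    have := Gamma_pos_of_pos hμ₁; have := Gamma_pos_of_pos hμ₂; positivity
  simp only [ratio_series_term_eq hβ₁ hα₂ hβ₂ hx] at hsum
  exact ⟨(summable_mul_left_iff hK).1 hsum.summable, by rw [← hsum.tsum_eq, tsum_mul_left]⟩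
end

section
/- Let Υ₁ and Υ₂ be independent random variables with α-μ power densities with parameters (α₁, μ₁, β₁) and (α₂, μ₂, β₂) and suppose α₁ = α₂ = α. Then the density of X = Υ₁/Υ₂ is f_X(x) = (α/2) · Γ(μ₁+μ₂)/(Γ(μ₁)Γ(μ₂)) · (β₂/β₁)^(αμ₁/2) x^(αμ₁/2 − 1) · (1 + (xβ₂/β₁)^(α/2))^(−μ₁−μ₂) for x > 0. -/
/-! With `a = α / 2`, the integrand `y f₁(xy) f₂(y)` is a constant times
`y ^ (a (μ₁ + μ₂) - 1) * exp (-c y ^ a)` with `c = β₁ ^ (-a) x ^ a + β₂ ^ (-a)`, so the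
generalized Gamma integral gives `Γ(μ₁ + μ₂) / (a c ^ (μ₁ + μ₂))`; factoring `β₂ ^ (-a)` out of `c`
produces the term `1 + (x β₂ / β₁) ^ a`. -/

open MeasureTheory Real Set

theorem integral_rpow_mul_exp_neg_mul_rpow_eq_Gamma_div {a μ c : ℝ} (ha : 0 < a) (hμ : 0 < μ)
    (hc : 0 < c) :
    ∫ y in Ioi (0 : ℝ), y ^ (a * μ - 1) * exp (-c * y ^ a) = Gamma μ / (a * c ^ μ) := by
  have hq : -1 < a * μ - 1 := by nlinarith [mul_pos ha hμ]
  have hexp : (a * μ - 1 + 1) / a = μ := by field_simp; ring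
  rw [integral_rpow_mul_exp_neg_mul_rpow ha hq hc, neg_div, hexp, rpow_neg hc.le]
  field_simp

theorem alphaMuPowerPDF_eq_of_nonneg {α μ β γ : ℝ} (hβ : 0 ≤ β) (hγ : 0 ≤ γ) :
    alphaMuPowerPDF α μ β γ = α / 2 / (β ^ (α * μ / 2) * Gamma μ) *
      (γ ^ (α * μ / 2 - 1) * exp (-β ^ (-(α / 2)) * γ ^ (α / 2))) := by
  rw [alphaMuPowerPDF, div_rpow hγ hβ, rpow_neg hβ]
  ring_nf

theorem mul_alphaMuPowerPDF_mul_mul_alphaMuPowerPDF {α μ₁ β₁ μ₂ β₂ x y : ℝ} (hβ₁ : 0 ≤ β₁)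
    (hβ₂ : 0 ≤ β₂) (hx : 0 ≤ x) (hy : 0 < y) :
    y * alphaMuPowerPDF α μ₁ β₁ (x * y) * alphaMuPowerPDF α μ₂ β₂ y =
      (α / 2) ^ 2 * x ^ (α * μ₁ / 2 - 1) /
          (β₁ ^ (α * μ₁ / 2) * β₂ ^ (α * μ₂ / 2) * (Gamma μ₁ * Gamma μ₂)) *
        (y ^ (α / 2 * (μ₁ + μ₂) - 1) *
          exp (-(β₁ ^ (-(α / 2)) * x ^ (α / 2) + β₂ ^ (-(α / 2))) * y ^ (α / 2))) := by
  have hpow : y * y ^ (α * μ₁ / 2 - 1) * y ^ (α * μ₂ / 2 - 1) = y ^ (α / 2 * (μ₁ + μ₂) - 1) := by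
    conv_lhs => enter [1, 1]; rw [← rpow_one y]
    rw [← rpow_add hy, ← rpow_add hy]
    ring_nf
  have hexp : ∀ b₁ b₂ s t : ℝ, exp (-b₁ * (s * t)) * exp (-b₂ * t) = exp (-(b₁ * s + b₂) * t) := by
    intros; rw [← exp_add]; ring_nf
  rw [alphaMuPowerPDF_eq_of_nonneg hβ₁ (by positivity), alphaMuPowerPDF_eq_of_nonneg hβ₂ hy.le,
    mul_rpow hx hy.le, mul_rpow hx hy.le, ← hpow, ← hexp]
  ring

theorem rpow_neg_mul_rpow_add_rpow_neg {a b₁ b₂ x : ℝ} (hb₁ : 0 < b₁) (hb₂ : 0 < b₂)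
    (hx : 0 ≤ x) :
    b₁ ^ (-a) * x ^ a + b₂ ^ (-a) = b₂ ^ (-a) * (1 + (x * b₂ / b₁) ^ a) := by
  rw [div_rpow (by positivity) hb₁.le, mul_rpow hx hb₂.le, rpow_neg hb₁.le, rpow_neg hb₂.le]
  field_simp
  ring

theorem ratio_density_equal_alpha
    (α μ₁ β₁ μ₂ β₂ : ℝ)
    (hα : 0 < α) (hμ₁ : 0 < μ₁) (hβ₁ : 0 < β₁) (hμ₂ : 0 < μ₂) (hβ₂ : 0 < β₂)
    (x : ℝ) (hx : 0 < x) :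
    (∫ y in Ioi (0:ℝ),
        y * alphaMuPowerPDF α μ₁ β₁ (x * y) * alphaMuPowerPDF α μ₂ β₂ y) =
      α / 2 * (Real.Gamma (μ₁ + μ₂) / (Real.Gamma μ₁ * Real.Gamma μ₂)) *
        (β₂ / β₁) ^ (α * μ₁ / 2) * x ^ (α * μ₁ / 2 - 1) *
        (1 + (x * β₂ / β₁) ^ (α / 2)) ^ (-μ₁ - μ₂) := by
  rw [setIntegral_congr_fun measurableSet_Ioi fun y hy ↦
      mul_alphaMuPowerPDF_mul_mul_alphaMuPowerPDF hβ₁.le hβ₂.le hx.le hy,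
    integral_const_mul, integral_rpow_mul_exp_neg_mul_rpow_eq_Gamma_div (by positivity)
      (add_pos hμ₁ hμ₂) (by positivity), rpow_neg_mul_rpow_add_rpow_neg hβ₁ hβ₂ hx.le,
    mul_rpow (by positivity) (by positivity),
    ← rpow_mul hβ₂.le, div_rpow hβ₂.le hβ₁.le, show -μ₁ - μ₂ = -(μ₁ + μ₂) by ring,
    rpow_neg (by positivity), show -(α / 2) * (μ₁ + μ₂) = -(α * μ₁ / 2 + α * μ₂ / 2) by ring,
    rpow_neg hβ₂.le, rpow_add hβ₂]
  field_simp
end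

section
/- Let R₁ and R₂ be independent with α-μ densities with parameters (α₁, μ₁, r̂₁) and (α₂, μ₂, r̂₂), and set X = R₁²/R₂². Then for every real n with −μ₁α₁/2 < n < μ₂α₂/2, E[X^n] = r̂₁^(2n) r̂₂^(−2n) μ₁^(−2n/α₁) μ₂^(2n/α₂) Γ(μ₁ + 2n/α₁) Γ(μ₂ − 2n/α₂) / (Γ(μ₁) Γ(μ₂)). -/
/-! After the substitution `t = μ (r / r̂)^α` every moment of an α-μ variable is a Gamma
integral, `E[R^p] = r̂^p μ^(-p/α) Γ(μ + p/α) / Γ(μ)` for `p > -αμ`. Writing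
`X^n = (R₁²)^n (R₂²)^(-n)`, independence factors `E[X^n]` into the moment of order `2n`
of `R₁` and the moment of order `-2n` of `R₂`. -/

open MeasureTheory ProbabilityTheory Real Set

/-- The α-μ envelope density. -/
noncomputable def alphaMuPDF (α μ rh r : ℝ) : ℝ :=
  α * μ ^ μ * r ^ (α * μ - 1) / (rh ^ (α * μ) * Real.Gamma μ) *
    Real.exp (-μ * r ^ α / rh ^ α)

lemma measurable_alphaMuPDF (α μ rh : ℝ) : Measurable (alphaMuPDF α μ rh) := by
  unfold alphaMuPDF
  fun_prop

lemma alphaMuPDF_nonneg {α μ rh r : ℝ} (hα : 0 < α) (hμ : 0 < μ) (hrh : 0 < rh) (hr : 0 < r) :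
    0 ≤ alphaMuPDF α μ rh r := by
  have := Real.Gamma_pos_of_pos hμ
  unfold alphaMuPDF
  positivity

lemma integral_comp_eq_setIntegral_mul_of_map_eq_withDensity {Ω : Type*} [MeasurableSpace Ω]
    {P : Measure Ω} {R : Ω → ℝ} {f : ℝ → ℝ} {s : Set ℝ} (hR : Measurable R) (hf : Measurable f)
    (hs : MeasurableSet s) (hf_nonneg : ∀ r ∈ s, 0 ≤ f r)
    (hd : P.map R = volume.withDensity (fun r => ENNReal.ofReal (s.indicator f r)))
    {g : ℝ → ℝ} (hg : Measurable g) :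
    ∫ ω, g (R ω) ∂P = ∫ r in s, f r * g r := by
  have hdens : (fun r => (ENNReal.ofReal (s.indicator f r)).toReal • g r) =
      s.indicator (fun r => f r * g r) := by
    funext r
    by_cases hr : r ∈ s
    · simp [hr, ENNReal.toReal_ofReal (hf_nonneg r hr)]
    · simp [hr]
  rw [← integral_map hR.aemeasurable hg.aestronglyMeasurable, hd,
    integral_withDensity_eq_integral_toReal_smul
      (hf.indicator hs).ennreal_ofReal (by simp), hdens,
    integral_indicator hs]

lemma setIntegral_alphaMuPDF_mul_rpow {α μ rh p : ℝ} (hα : 0 < α) (hμ : 0 < μ) (hrh : 0 < rh)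
    (hp : -(α * μ) < p) :
    ∫ r in Ioi (0:ℝ), alphaMuPDF α μ rh r * r ^ p
      = rh ^ p * μ ^ (-p / α) * Real.Gamma (μ + p / α) / Real.Gamma μ := by
  have hb : 0 < μ / rh ^ α := by positivity
  have hgamma_int := integral_rpow_mul_exp_neg_mul_rpow hα (by linarith : -1 < α * μ - 1 + p) hb
  have hintegrand : ∀ r ∈ Ioi (0:ℝ), alphaMuPDF α μ rh r * r ^ p =
      α * μ ^ μ / (rh ^ (α * μ) * Real.Gamma μ) *
        (r ^ (α * μ - 1 + p) * Real.exp (-(μ / rh ^ α) * r ^ α)) := by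
    intro r hr
    rw [alphaMuPDF, Real.rpow_add hr, show -μ * r ^ α / rh ^ α = -(μ / rh ^ α) * r ^ α by ring]
    ring
  have hexp : (α * μ - 1 + p + 1) / α = μ + p / α := by field_simp; ring
  have hscale : (μ / rh ^ α) ^ (-(μ + p / α)) =
      rh ^ (α * μ) * rh ^ p / (μ ^ μ * μ ^ (p / α)) := by
    rw [Real.rpow_neg hb.le, Real.div_rpow hμ.le (by positivity), inv_div,
      ← Real.rpow_mul hrh.le, mul_add, mul_div_cancel₀ _ hα.ne', Real.rpow_add hrh,
      Real.rpow_add hμ]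
  rw [setIntegral_congr_fun measurableSet_Ioi hintegrand, integral_const_mul, hgamma_int,
    neg_div, hexp, hscale, neg_div, Real.rpow_neg hμ.le]
  have := Real.Gamma_pos_of_pos hμ
  have := Real.rpow_pos_of_pos hμ μ
  have := Real.rpow_pos_of_pos hμ (p / α)
  have := Real.rpow_pos_of_pos hrh (α * μ)
  field_simp

lemma integral_sq_rpow_of_map_eq_alphaMu {Ω : Type*} [MeasurableSpace Ω] {P : Measure Ω}
    {α μ rh : ℝ} (hα : 0 < α) (hμ : 0 < μ) (hrh : 0 < rh) {R : Ω → ℝ} (hR : Measurable R)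
    (hd : P.map R = volume.withDensity
      (fun r => ENNReal.ofReal ((Ioi (0:ℝ)).indicator (alphaMuPDF α μ rh) r)))
    {p : ℝ} (hp : -(α * μ) < 2 * p) :
    ∫ ω, (R ω ^ 2) ^ p ∂P
      = rh ^ (2 * p) * μ ^ (-(2 * p) / α) * Real.Gamma (μ + 2 * p / α) / Real.Gamma μ := by
  rw [integral_comp_eq_setIntegral_mul_of_map_eq_withDensity hR (measurable_alphaMuPDF α μ rh)
    measurableSet_Ioi (fun _ hr => alphaMuPDF_nonneg hα hμ hrh hr) hd (g := fun x => (x ^ 2) ^ p) (by fun_prop),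
    ← setIntegral_alphaMuPDF_mul_rpow hα hμ hrh hp]
  refine setIntegral_congr_fun measurableSet_Ioi fun r hr => ?_
  rw [← Real.rpow_natCast, ← Real.rpow_mul (le_of_lt hr), Nat.cast_ofNat]

theorem ratio_squared_alphaMu_moments_general
    {Ω : Type*} [MeasureSpace Ω]
    (α₁ μ₁ rh₁ α₂ μ₂ rh₂ : ℝ)
    (hα₁ : 0 < α₁) (hμ₁ : 0 < μ₁) (hr₁ : 0 < rh₁)
    (hα₂ : 0 < α₂) (hμ₂ : 0 < μ₂) (hr₂ : 0 < rh₂)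
    (R₁ R₂ : Ω → ℝ) (hm₁ : Measurable R₁) (hm₂ : Measurable R₂)
    (hind : IndepFun R₁ R₂ ℙ)
    (hd₁ : Measure.map R₁ ℙ = volume.withDensity
      (fun r => ENNReal.ofReal ((Ioi (0:ℝ)).indicator (alphaMuPDF α₁ μ₁ rh₁) r)))
    (hd₂ : Measure.map R₂ ℙ = volume.withDensity
      (fun r => ENNReal.ofReal ((Ioi (0:ℝ)).indicator (alphaMuPDF α₂ μ₂ rh₂) r)))
    (n : ℝ) (hn₁ : -(μ₁ * α₁ / 2) < n) (hn₂ : n < μ₂ * α₂ / 2) :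
    ∫ ω, ((R₁ ω) ^ 2 / (R₂ ω) ^ 2) ^ n ∂ℙ =
      rh₁ ^ (2 * n) * rh₂ ^ (-(2 * n)) * μ₁ ^ (-(2 * n) / α₁) * μ₂ ^ (2 * n / α₂) *
        Real.Gamma (μ₁ + 2 * n / α₁) * Real.Gamma (μ₂ - 2 * n / α₂) /
        (Real.Gamma μ₁ * Real.Gamma μ₂) := by
  have hsplit : (fun ω => (R₁ ω ^ 2 / R₂ ω ^ 2) ^ n) =
      fun ω => (R₁ ω ^ 2) ^ n * (R₂ ω ^ 2) ^ (-n) := by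
    funext ω
    rw [Real.div_rpow (sq_nonneg _) (sq_nonneg _), Real.rpow_neg (sq_nonneg _), div_eq_mul_inv]
  have hg₁ : Measurable fun x : ℝ => (x ^ 2) ^ n := by fun_prop
  have hg₂ : Measurable fun x : ℝ => (x ^ 2) ^ (-n) := by fun_prop
  have hfactor : ∫ ω, (R₁ ω ^ 2) ^ n * (R₂ ω ^ 2) ^ (-n) ∂ℙ =
      (∫ ω, (R₁ ω ^ 2) ^ n ∂ℙ) * ∫ ω, (R₂ ω ^ 2) ^ (-n) ∂ℙ :=
    (hind.comp hg₁ hg₂).integral_fun_mul_eq_mul_integral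
      (hg₁.comp hm₁).aestronglyMeasurable (hg₂.comp hm₂).aestronglyMeasurable
  rw [hsplit, hfactor,
    integral_sq_rpow_of_map_eq_alphaMu hα₁ hμ₁ hr₁ hm₁ hd₁ (by linarith),
    integral_sq_rpow_of_map_eq_alphaMu hα₂ hμ₂ hr₂ hm₂ hd₂ (by linarith),
    show μ₂ + 2 * -n / α₂ = μ₂ - 2 * n / α₂ by ring,
    show -(2 * -n) / α₂ = 2 * n / α₂ by ring, mul_neg]
  ring

theorem ratio_squared_alphaMu_moments
    {Ω : Type*} [MeasureSpace Ω] [IsProbabilityMeasure (ℙ : Measure Ω)]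
    (α₁ μ₁ rh₁ α₂ μ₂ rh₂ : ℝ)
    (hα₁ : 0 < α₁) (hμ₁ : 0 < μ₁) (hr₁ : 0 < rh₁)
    (hα₂ : 0 < α₂) (hμ₂ : 0 < μ₂) (hr₂ : 0 < rh₂)
    (R₁ R₂ : Ω → ℝ) (hm₁ : Measurable R₁) (hm₂ : Measurable R₂)
    (hind : IndepFun R₁ R₂ ℙ)
    (hd₁ : Measure.map R₁ ℙ = volume.withDensity
      (fun r => ENNReal.ofReal ((Ioi (0:ℝ)).indicator (alphaMuPDF α₁ μ₁ rh₁) r)))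
    (hd₂ : Measure.map R₂ ℙ = volume.withDensity
      (fun r => ENNReal.ofReal ((Ioi (0:ℝ)).indicator (alphaMuPDF α₂ μ₂ rh₂) r)))
    (n : ℝ) (hn₁ : -(μ₁ * α₁ / 2) < n) (hn₂ : n < μ₂ * α₂ / 2) :
    ∫ ω, ((R₁ ω) ^ 2 / (R₂ ω) ^ 2) ^ n ∂ℙ =
      rh₁ ^ (2 * n) * rh₂ ^ (-(2 * n)) * μ₁ ^ (-(2 * n) / α₁) * μ₂ ^ (2 * n / α₂) *
        Real.Gamma (μ₁ + 2 * n / α₁) * Real.Gamma (μ₂ - 2 * n / α₂) /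
        (Real.Gamma μ₁ * Real.Gamma μ₂) :=
  ratio_squared_alphaMu_moments_general α₁ μ₁ rh₁ α₂ μ₂ rh₂ hα₁ hμ₁ hr₁ hα₂ hμ₂ hr₂ R₁ R₂ hm₁ hm₂
    hind hd₁ hd₂ n hn₁ hn₂
end

section
/- Let Υ₁ and Υ₂ be independent with α-μ power densities with parameters (α₁, μ₁, β₁), (α₂, μ₂, β₂), and k = α₁/α₂ ≤ 1. Then the CDF of X = Υ₁/Υ₂ admits the convergent series F_X(x) = (1/(Γ(μ₁)Γ(μ₂))) z^(μ₁) Σ_{h=0}^∞ (−1)^h z^h Γ(k(h+μ₁)+μ₂) / ((h+μ₁) Γ(h+1)), where z = (xβ₂/β₁)^(α₁/2), valid for all x > 0 when k < 1 (and for z < 1 when k = 1). -/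
/-!
By independence, F_X(x) = ∫₀^∞ F_{Υ₁}(xy) f_{Υ₂}(y) dy. Expanding the exponential in the α-μ
density and integrating termwise gives the lower incomplete gamma series
F_{Υ₁}(t) = Σₙ (-1)ⁿ T^(μ₁+n) / (Γ(μ₁) n! (μ₁+n)) with T = (t/β₁)^(α₁/2); for t = xy this is a
series in the powers y^(α₁(μ₁+n)/2), whose integrals against f_{Υ₂} are Gamma moments, and the
n-th one produces the n-th term of the claimed series.

Sum and integral may be interchanged because that series converges absolutely. This is the ratio
test: Wendel's bound Γ(s+k) ≤ Γ(s) sᵏ (log-convexity of Γ, 0 ≤ k ≤ 1) bounds the ratio of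
consecutive terms by z (k(n+μ₁)+μ₂)ᵏ / (n+1), which tends to 0 when k < 1 and to z when k = 1.
-/

open MeasureTheory ProbabilityTheory Real Set

open Filter Topology

namespace Real

lemma Gamma_add_le_mul_rpow {s k : ℝ} (hs : 0 < s) (hk0 : 0 ≤ k) (hk1 : k ≤ 1) :
    Gamma (s + k) ≤ Gamma s * s ^ k := by
  rcases hk0.eq_or_lt with rfl | hk0
  · simp
  rcases hk1.eq_or_lt with rfl | hk1
  · rw [Gamma_add_one hs.ne', rpow_one, mul_comm]
  have hΓ := Gamma_pos_of_pos hs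
  have h := Gamma_mul_add_mul_le_rpow_Gamma_mul_rpow_Gamma hs (by linarith : 0 < s + 1)
    (sub_pos.2 hk1) hk0 (by ring)
  rwa [show (1 - k) * s + k * (s + 1) = s + k by ring, Gamma_add_one hs.ne',
    mul_rpow hs.le hΓ.le, mul_left_comm, ← rpow_add hΓ, sub_add_cancel, rpow_one, mul_comm] at h

end Real

lemma summable_of_norm_succ_le_mul_of_tendsto {E : Type*} [NormedAddCommGroup E] [CompleteSpace E]
    {f : ℕ → E} {ρ : ℕ → ℝ} {L : ℝ} (hL : L < 1) (hρ : Tendsto ρ atTop (𝓝 L))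
    (hf : ∀ n, ‖f (n + 1)‖ ≤ ρ n * ‖f n‖) : Summable f := by
  obtain ⟨r, hLr, hr1⟩ := exists_between hL
  refine summable_of_ratio_norm_eventually_le hr1 ?_
  filter_upwards [hρ.eventually (gt_mem_nhds hLr)] with n hn
  exact (hf n).trans (mul_le_mul_of_nonneg_right hn.le (norm_nonneg _))

noncomputable def ratioSeriesTerm (k μ₁ μ₂ z : ℝ) (n : ℕ) : ℝ :=
  (-1) ^ n * z ^ n * Gamma (k * (n + μ₁) + μ₂) / ((n + μ₁) * Gamma (n + 1))

lemma norm_ratioSeriesTerm_succ_le {k μ₁ μ₂ z : ℝ} (hk0 : 0 ≤ k) (hk1 : k ≤ 1) (hμ₁ : 0 < μ₁)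
    (hμ₂ : 0 < μ₂) (hz : 0 ≤ z) (n : ℕ) :
    ‖ratioSeriesTerm k μ₁ μ₂ z (n + 1)‖
      ≤ z * (k * (n + μ₁) + μ₂) ^ k / (n + 1) * ‖ratioSeriesTerm k μ₁ μ₂ z n‖ := by
  set s := k * (n + μ₁) + μ₂
  have hs : 0 < s := by positivity
  have hΓn : 0 < Gamma (n + 1) := Gamma_pos_of_pos (by positivity)
  have hnorm : ∀ m : ℕ, ‖ratioSeriesTerm k μ₁ μ₂ z m‖
      = z ^ m * Gamma (k * (m + μ₁) + μ₂) / ((m + μ₁) * Gamma (m + 1)) := fun m => by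
    have := Gamma_pos_of_pos (by positivity : 0 < k * (m + μ₁) + μ₂)
    have := Gamma_pos_of_pos (by positivity : (0 : ℝ) < m + 1)
    rw [ratioSeriesTerm, norm_div, norm_mul, norm_mul, norm_pow, norm_neg, norm_one, one_pow,
      one_mul, norm_pow, Real.norm_of_nonneg hz, Real.norm_of_nonneg (by positivity),
      Real.norm_of_nonneg (by positivity)]
  rw [hnorm, hnorm]
  push_cast
  rw [show k * (n + 1 + μ₁) + μ₂ = s + k by ring, Gamma_add_one (by positivity : (n : ℝ) + 1 ≠ 0)]
  calc z ^ (n + 1) * Gamma (s + k) / ((n + 1 + μ₁) * ((n + 1) * Gamma (n + 1)))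
      ≤ z ^ (n + 1) * (Gamma s * s ^ k) / ((n + μ₁) * ((n + 1) * Gamma (n + 1))) := by
        gcongr
        · exact Gamma_add_le_mul_rpow hs hk0 hk1
        · linarith
    _ = _ := by simp only [s]; field_simp; ring_nf

lemma summable_ratioSeriesTerm {k μ₁ μ₂ z : ℝ} (hk0 : 0 ≤ k) (hk1 : k ≤ 1) (hμ₁ : 0 < μ₁)
    (hμ₂ : 0 < μ₂) (hz : 0 ≤ z) (hz1 : k = 1 → z < 1) :
    Summable (ratioSeriesTerm k μ₁ μ₂ z) := by
  have hn1 : Tendsto (fun n : ℕ => (n : ℝ) + 1) atTop atTop :=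
    tendsto_atTop_add_const_right _ _ tendsto_natCast_atTop_atTop
  rcases hk1.eq_or_lt with rfl | hk1'
  · refine summable_of_norm_succ_le_mul_of_tendsto (hz1 rfl) ?_
      (norm_ratioSeriesTerm_succ_le hk0 hk1 hμ₁ hμ₂ hz)
    have := (tendsto_add_mul_div_add_mul_atTop_nhds (μ₁ + μ₂) 1 1 one_ne_zero).const_mul z
    simp only [div_one, mul_one] at this
    refine this.congr fun n => ?_
    rw [rpow_one, one_mul]; ring_nf
  · refine summable_of_norm_succ_le_mul_of_tendsto zero_lt_one ?_
      (norm_ratioSeriesTerm_succ_le hk0 hk1 hμ₁ hμ₂ hz)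
    have hlin := (tendsto_add_mul_div_add_mul_atTop_nhds (k * μ₁ + μ₂) 1 k one_ne_zero)
    have hdecay := (tendsto_rpow_neg_atTop (sub_pos.2 hk1')).comp hn1
    have := ((hlin.rpow_const (Or.inr hk0)).mul hdecay).const_mul z
    rw [mul_zero, mul_zero] at this
    refine this.congr' ?_
    filter_upwards with n
    simp only [Function.comp_apply]
    rw [show (k * μ₁ + μ₂ + k * n) / (1 + 1 * n) = (k * (n + μ₁) + μ₂) / (n + 1) by ring_nf,
      div_rpow (by positivity) (by positivity), show -(1 - k) = k - 1 by ring,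
      rpow_sub_one (by positivity)]
    field_simp

lemma integral_tsum_mul_of_nonneg {α : Type*} [MeasurableSpace α] {μ : Measure α} {a : ℕ → ℝ}
    {g : ℕ → α → ℝ} (hg : ∀ n, 0 ≤ᵐ[μ] g n) (hint : ∀ n, Integrable (g n) μ)
    (hsum : Summable fun n => |a n| * ∫ x, g n x ∂μ) :
    ∫ x, ∑' n, a n * g n x ∂μ = ∑' n, a n * ∫ x, g n x ∂μ := by
  have hnorm : ∀ n, ∫ x, ‖a n * g n x‖ ∂μ = |a n| * ∫ x, g n x ∂μ := fun n => by
    rw [← integral_const_mul]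
    refine integral_congr_ae ((hg n).mono fun x hx => ?_)
    dsimp only
    rw [norm_mul, Real.norm_eq_abs, Real.norm_of_nonneg hx]
  rw [← integral_tsum_of_summable_integral_norm (fun n => (hint n).const_mul (a n))
    (by simpa only [hnorm] using hsum)]
  simp only [integral_const_mul]

lemma integral_Ioc_rpow {t q : ℝ} (ht : 0 < t) (hq : -1 < q) :
    ∫ u in Ioc 0 t, u ^ q = t ^ (q + 1) / (q + 1) := by
  rw [← intervalIntegral.integral_of_le ht.le, integral_rpow (Or.inl hq),
    zero_rpow (by linarith), sub_zero]

lemma exp_neg_mul_rpow_eq_tsum {c p u : ℝ} (hu : 0 ≤ u) :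
    exp (-c * u ^ p) = ∑' n : ℕ, (-c) ^ n / n.factorial * u ^ (p * n) := by
  rw [exp_eq_exp_ℝ, NormedSpace.exp_eq_tsum_div]
  refine tsum_congr fun n => ?_
  rw [mul_pow, rpow_mul hu, rpow_natCast]
  ring

lemma integral_Ioc_rpow_mul_exp_neg_mul_rpow {r p c t : ℝ} (hr : -1 < r) (hp : 0 ≤ p)
    (ht : 0 < t) :
    ∫ u in Ioc 0 t, u ^ r * exp (-c * u ^ p)
      = ∑' n : ℕ, (-c) ^ n / n.factorial * (t ^ (r + p * n + 1) / (r + p * n + 1)) := by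
  have hq : ∀ n : ℕ, -1 < r + p * n := fun n => by nlinarith [mul_nonneg hp n.cast_nonneg]
  have hseries : ∀ u ∈ Ioc 0 t, u ^ r * exp (-c * u ^ p)
      = ∑' n : ℕ, (-c) ^ n / n.factorial * u ^ (r + p * n) := fun u hu => by
    rw [exp_neg_mul_rpow_eq_tsum hu.1.le, ← tsum_mul_left]
    refine tsum_congr fun n => ?_
    rw [rpow_add hu.1]
    ring
  rw [setIntegral_congr_fun measurableSet_Ioc hseries, integral_tsum_mul_of_nonneg]
  · simp only [integral_Ioc_rpow ht (hq _)]
  · exact fun n => (ae_restrict_iff' measurableSet_Ioc).2 (ae_of_all _ fun u hu =>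
      rpow_nonneg hu.1.le _)
  · exact fun n => (intervalIntegrable_iff_integrableOn_Ioc_of_le ht.le).1
      (intervalIntegral.intervalIntegrable_rpow' (hq n))
  · simp only [integral_Ioc_rpow ht (hq _)]
    have hpos : ∀ n : ℕ, 0 < r + p * n + 1 := fun n => by linarith [hq n]
    refine Summable.of_nonneg_of_le (fun n => by have := hpos n; positivity) (fun n => ?_)
      ((summable_pow_div_factorial (|c| * t ^ p)).mul_left (t ^ (r + 1) / (r + 1)))
    have h0 : 0 < r + 1 := by linarith
    rw [abs_div, abs_pow, abs_neg, Nat.abs_cast]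
    calc _ ≤ |c| ^ n / n.factorial * (t ^ (r + p * n + 1) / (r + 1)) := by
          gcongr
          nlinarith [mul_nonneg hp n.cast_nonneg]
      _ = _ := by
          rw [mul_pow, ← rpow_natCast (t ^ p), ← rpow_mul ht.le,
            show r + p * n + 1 = r + 1 + p * n by ring, rpow_add ht]
          ring

section AlphaMu

variable {a m b : ℝ}

lemma alphaMuPowerPDF_eq (hb : 0 < b) {u : ℝ} (hu : 0 ≤ u) :
    alphaMuPowerPDF a m b u = a / 2 / (b ^ (a * m / 2) * Gamma m)
      * (u ^ (a * m / 2 - 1) * exp (-(b ^ (a / 2))⁻¹ * u ^ (a / 2))) := by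
  rw [alphaMuPowerPDF, div_rpow hu hb.le, neg_mul, div_eq_inv_mul (u ^ (a / 2))]
  ring

lemma alphaMuPowerPDF_nonneg (ha : 0 ≤ a) (hm : 0 < m) (hb : 0 < b) {u : ℝ} (hu : 0 ≤ u) :
    0 ≤ alphaMuPowerPDF a m b u := by
  have := Gamma_pos_of_pos hm
  rw [alphaMuPowerPDF_eq hb hu]
  positivity

lemma rpow_mul_alphaMuPowerPDF_eq (hb : 0 < b) {e y : ℝ} (hy : 0 < y) :
    y ^ e * alphaMuPowerPDF a m b y = a / 2 / (b ^ (a * m / 2) * Gamma m)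
      * (y ^ (a * m / 2 - 1 + e) * exp (-(b ^ (a / 2))⁻¹ * y ^ (a / 2))) := by
  rw [alphaMuPowerPDF_eq hb hy.le, rpow_add hy]
  ring

lemma integrableOn_rpow_mul_alphaMuPowerPDF (ha : 0 < a) (hb : 0 < b) {e : ℝ}
    (he : -(a * m / 2) < e) :
    IntegrableOn (fun y => y ^ e * alphaMuPowerPDF a m b y) (Ioi 0) :=
  IntegrableOn.congr_fun ((integrableOn_rpow_mul_exp_neg_mul_rpow (by linarith) (half_pos ha)
    (inv_pos.2 (rpow_pos_of_pos hb (a / 2)))).const_mul _)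
    (fun _ hy => (rpow_mul_alphaMuPowerPDF_eq hb hy).symm) measurableSet_Ioi

lemma integrableOn_alphaMuPowerPDF (ha : 0 < a) (hm : 0 < m) (hb : 0 < b) :
    IntegrableOn (alphaMuPowerPDF a m b) (Ioi 0) := by
  simpa using integrableOn_rpow_mul_alphaMuPowerPDF (e := 0) ha hb (neg_neg_of_pos (by positivity))

lemma integral_rpow_mul_alphaMuPowerPDF (ha : 0 < a) (hb : 0 < b) {e : ℝ}
    (he : -(a * m / 2) < e) :
    ∫ y in Ioi 0, y ^ e * alphaMuPowerPDF a m b y = b ^ e * Gamma (m + 2 * e / a) / Gamma m := by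
  rw [setIntegral_congr_fun measurableSet_Ioi fun _ hy => rpow_mul_alphaMuPowerPDF_eq hb hy,
    integral_const_mul, integral_rpow_mul_exp_neg_mul_rpow (half_pos ha) (by linarith)
      (inv_pos.2 (rpow_pos_of_pos hb _)),
    inv_rpow (rpow_nonneg hb.le _), ← rpow_neg (rpow_nonneg hb.le _), ← rpow_mul hb.le,
    show a / 2 * -(-(a * m / 2 - 1 + e + 1) / (a / 2)) = a * m / 2 + e by field_simp; ring,
    show (a * m / 2 - 1 + e + 1) / (a / 2) = m + 2 * e / a by field_simp; ring,
    rpow_add hb]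
  have := rpow_pos_of_pos hb (a * m / 2)
  field_simp

lemma integral_Ioc_alphaMuPowerPDF (ha : 0 < a) (hm : 0 < m) (hb : 0 < b) {t : ℝ} (ht : 0 < t) :
    ∫ u in Ioc 0 t, alphaMuPowerPDF a m b u
      = ∑' n : ℕ, (-1) ^ n / (Gamma m * ((m + n) * n.factorial)) * (t / b) ^ (a / 2 * (m + n)) := by
  have hr : -1 < a * m / 2 - 1 := by nlinarith
  rw [setIntegral_congr_fun measurableSet_Ioc (fun u hu => alphaMuPowerPDF_eq hb hu.1.le),
    integral_const_mul, integral_Ioc_rpow_mul_exp_neg_mul_rpow hr (half_pos ha).le ht,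
    ← tsum_mul_left]
  refine tsum_congr fun n => ?_
  have := Gamma_pos_of_pos hm
  rw [show a * m / 2 - 1 + a / 2 * n + 1 = a / 2 * (m + n) by ring, div_rpow ht.le hb.le,
    neg_pow, inv_pow, ← rpow_natCast (b ^ (a / 2)), ← rpow_mul hb.le, mul_add, rpow_add hb,
    show a / 2 * m = a * m / 2 by ring]
  field_simp

end AlphaMu

lemma ProbabilityTheory.IndepFun.measure_preimage_prod_eq_lintegral {Ω β β' : Type*}
    [MeasurableSpace Ω] [MeasurableSpace β] [MeasurableSpace β'] {P : Measure Ω} {X : Ω → β}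
    {Y : Ω → β'} (hXY : IndepFun X Y P) (hX : Measurable X) (hY : Measurable Y)
    [SigmaFinite (P.map X)] [SigmaFinite (P.map Y)] {S : Set (β × β')} (hS : MeasurableSet S) :
    P ((fun ω => (X ω, Y ω)) ⁻¹' S) = ∫⁻ y, P.map X ((fun x => (x, y)) ⁻¹' S) ∂P.map Y := by
  rw [← Measure.prod_apply_symm hS, ← (indepFun_iff_map_prod_eq_prod_map_map' hX.aemeasurable
    hY.aemeasurable ‹_› ‹_›).1 hXY, Measure.map_apply (hX.prodMk hY) hS]

lemma withDensity_ofReal_indicator {α : Type*} [MeasurableSpace α] (μ : Measure α) {s : Set α}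
    (hs : MeasurableSet s) (f : α → ℝ) :
    μ.withDensity (fun x => ENNReal.ofReal (s.indicator f x))
      = (μ.restrict s).withDensity (fun x => ENNReal.ofReal (f x)) := by
  rw [← withDensity_indicator hs]
  congr 1
  funext x
  by_cases hx : x ∈ s <;> simp [hx]

lemma withDensity_restrict_Ioi_apply_Iic {f : ℝ → ℝ} (hf : IntegrableOn f (Ioi 0))
    (hf0 : ∀ u ∈ Ioi 0, 0 ≤ f u) (t : ℝ) :
    (volume.restrict (Ioi 0)).withDensity (fun u => ENNReal.ofReal (f u)) (Iic t)
      = ENNReal.ofReal (∫ u in Ioc 0 t, f u) := by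
  rw [withDensity_apply _ measurableSet_Iic, Measure.restrict_restrict measurableSet_Iic,
    Iic_inter_Ioi, ofReal_integral_eq_lintegral_ofReal (hf.mono_set Ioc_subset_Ioi_self)]
  exact (ae_restrict_iff' measurableSet_Ioc).2 (ae_of_all _ fun u hu => hf0 u hu.1)

lemma monotone_integral_Ioc {f : ℝ → ℝ} (hf : IntegrableOn f (Ioi 0))
    (hf0 : ∀ u ∈ Ioi 0, 0 ≤ f u) : Monotone fun t => ∫ u in Ioc 0 t, f u := fun _ _ hst =>
  setIntegral_mono_set (hf.mono_set Ioc_subset_Ioi_self)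
    ((ae_restrict_iff' measurableSet_Ioc).2 (ae_of_all _ fun u hu => hf0 u hu.1))
    (Ioc_subset_Ioc_right hst).eventuallyLE

lemma ProbabilityTheory.IndepFun.measureReal_div_le_eq_integral {Ω : Type*} [MeasurableSpace Ω]
    {P : Measure Ω} {X Y : Ω → ℝ} {f₁ f₂ : ℝ → ℝ} (hXY : IndepFun X Y P) (hX : Measurable X)
    (hY : Measurable Y) (hf₁ : IntegrableOn f₁ (Ioi 0)) (hf₂ : IntegrableOn f₂ (Ioi 0))
    (hf₁0 : ∀ u ∈ Ioi 0, 0 ≤ f₁ u) (hf₂0 : ∀ u ∈ Ioi 0, 0 ≤ f₂ u)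
    (hd₁ : P.map X = volume.withDensity fun u => ENNReal.ofReal ((Ioi 0).indicator f₁ u))
    (hd₂ : P.map Y = volume.withDensity fun u => ENNReal.ofReal ((Ioi 0).indicator f₂ u))
    (x : ℝ) :
    (P {ω | X ω / Y ω ≤ x}).toReal = ∫ y in Ioi 0, (∫ u in Ioc 0 (x * y), f₁ u) * f₂ y := by
  rw [withDensity_ofReal_indicator _ measurableSet_Ioi] at hd₁ hd₂
  have := isFiniteMeasure_withDensity_ofReal hf₁.2
  have := isFiniteMeasure_withDensity_ofReal hf₂.2
  have : SigmaFinite (P.map X) := by rw [hd₁]; infer_instance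
  have : SigmaFinite (P.map Y) := by rw [hd₂]; infer_instance
  have hS : MeasurableSet {q : ℝ × ℝ | q.1 / q.2 ≤ x} :=
    measurableSet_le (measurable_fst.div measurable_snd) measurable_const
  have hslice : ∀ y ∈ Ioi (0 : ℝ), P.map X ((fun u => (u, y)) ⁻¹' {q | q.1 / q.2 ≤ x})
      = ENNReal.ofReal (∫ u in Ioc 0 (x * y), f₁ u) := fun y hy => by
    have : (fun u => (u, y)) ⁻¹' {q : ℝ × ℝ | q.1 / q.2 ≤ x} = Iic (x * y) := by
      ext u
      simp [div_le_iff₀ (show (0 : ℝ) < y from hy)]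
    rw [this, hd₁, withDensity_restrict_Ioi_apply_Iic hf₁ hf₁0]
  have hF := monotone_integral_Ioc hf₁ hf₁0
  have hF0 : ∀ t, 0 ≤ ∫ u in Ioc 0 t, f₁ u := fun t =>
    setIntegral_nonneg measurableSet_Ioc fun u hu => hf₁0 u hu.1
  calc (P {ω | X ω / Y ω ≤ x}).toReal
      = (∫⁻ y, P.map X ((fun u => (u, y)) ⁻¹' {q | q.1 / q.2 ≤ x}) ∂P.map Y).toReal := by
        rw [← hXY.measure_preimage_prod_eq_lintegral hX hY hS]
        rfl
    _ = (∫⁻ y in Ioi 0, ENNReal.ofReal ((∫ u in Ioc 0 (x * y), f₁ u) * f₂ y)).toReal := by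
        rw [hd₂, lintegral_withDensity_eq_lintegral_mul₀ hf₂.aemeasurable.ennreal_ofReal
          (measurable_measure_prodMk_right hS).aemeasurable]
        refine congrArg _ (setLIntegral_congr_fun measurableSet_Ioi fun y hy => ?_)
        rw [Pi.mul_apply, hslice y hy, ENNReal.ofReal_mul (hF0 _), mul_comm]
    _ = ∫ y in Ioi 0, (∫ u in Ioc 0 (x * y), f₁ u) * f₂ y := by
        refine (integral_eq_lintegral_of_nonneg_ae ?_ ?_).symm
        · exact (ae_restrict_iff' measurableSet_Ioi).2 (ae_of_all _ fun y hy =>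
            mul_nonneg (hF0 _) (hf₂0 y hy))
        · exact ((hF.measurable.comp (measurable_const_mul x)).aestronglyMeasurable.mul
            hf₂.aestronglyMeasurable)

lemma alphaMu_coeff_mul_moment_eq_ratioSeriesTerm {a₁ m₁ b₁ a₂ m₂ b₂ x : ℝ} (ha₁ : 0 < a₁)
    (hm₁ : 0 < m₁) (hb₁ : 0 < b₁) (ha₂ : 0 < a₂) (hm₂ : 0 < m₂) (hb₂ : 0 < b₂) (hx : 0 < x)
    (n : ℕ) :
    (-1) ^ n / (Gamma m₁ * ((m₁ + n) * n.factorial)) * (x / b₁) ^ (a₁ / 2 * (m₁ + n))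
        * ∫ y in Ioi 0, y ^ (a₁ / 2 * (m₁ + n)) * alphaMuPowerPDF a₂ m₂ b₂ y
      = 1 / (Gamma m₁ * Gamma m₂) * ((x * b₂ / b₁) ^ (a₁ / 2)) ^ m₁
        * ratioSeriesTerm (a₁ / a₂) m₁ m₂ ((x * b₂ / b₁) ^ (a₁ / 2)) n := by
  set z := (x * b₂ / b₁) ^ (a₁ / 2)
  have hz : 0 < z := by positivity
  have hpow : (x / b₁) ^ (a₁ / 2 * (m₁ + n)) * b₂ ^ (a₁ / 2 * (m₁ + n)) = z ^ m₁ * z ^ n := by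
    rw [← mul_rpow (by positivity) hb₂.le, rpow_mul (by positivity), ← mul_div_right_comm,
      rpow_add hz, rpow_natCast]
  rw [integral_rpow_mul_alphaMuPowerPDF ha₂ hb₂ (by nlinarith [mul_pos ha₂ hm₂]),
    ratioSeriesTerm, Gamma_nat_eq_factorial,
    show m₂ + 2 * (a₁ / 2 * (m₁ + n)) / a₂ = a₁ / a₂ * (n + m₁) + m₂ by field_simp; ring]
  have := Gamma_pos_of_pos hm₁
  have := Gamma_pos_of_pos hm₂
  calc _ = (-1) ^ n * ((x / b₁) ^ (a₁ / 2 * (m₁ + n)) * b₂ ^ (a₁ / 2 * (m₁ + n)))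
        * Gamma (a₁ / a₂ * (n + m₁) + m₂) / (Gamma m₁ * ((m₁ + n) * n.factorial) * Gamma m₂) := by
        field_simp
    _ = _ := by rw [hpow]; field_simp; ring

lemma integral_cdf_mul_alphaMuPowerPDF {a₁ m₁ b₁ a₂ m₂ b₂ x : ℝ} (ha₁ : 0 < a₁) (hm₁ : 0 < m₁)
    (hb₁ : 0 < b₁) (ha₂ : 0 < a₂) (hm₂ : 0 < m₂) (hb₂ : 0 < b₂) (hx : 0 < x)
    (hsum : Summable (ratioSeriesTerm (a₁ / a₂) m₁ m₂ ((x * b₂ / b₁) ^ (a₁ / 2)))) :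
    ∫ y in Ioi 0, (∫ u in Ioc 0 (x * y), alphaMuPowerPDF a₁ m₁ b₁ u) * alphaMuPowerPDF a₂ m₂ b₂ y
      = 1 / (Gamma m₁ * Gamma m₂) * ((x * b₂ / b₁) ^ (a₁ / 2)) ^ m₁
        * ∑' n, ratioSeriesTerm (a₁ / a₂) m₁ m₂ ((x * b₂ / b₁) ^ (a₁ / 2)) n := by
  set e : ℕ → ℝ := fun n => a₁ / 2 * (m₁ + n)
  set c : ℕ → ℝ := fun n => (-1) ^ n / (Gamma m₁ * ((m₁ + n) * n.factorial)) * (x / b₁) ^ e n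
  have hseries : ∀ y ∈ Ioi (0 : ℝ), (∫ u in Ioc 0 (x * y), alphaMuPowerPDF a₁ m₁ b₁ u)
      * alphaMuPowerPDF a₂ m₂ b₂ y = ∑' n, c n * (y ^ e n * alphaMuPowerPDF a₂ m₂ b₂ y) :=
    fun y hy => by
      rw [integral_Ioc_alphaMuPowerPDF ha₁ hm₁ hb₁ (mul_pos hx hy), ← tsum_mul_right]
      refine tsum_congr fun n => ?_
      rw [mul_div_right_comm, mul_rpow (by positivity) (le_of_lt hy)]
      ring
  have he : ∀ n, -(a₂ * m₂ / 2) < e n := fun n => by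
    have : 0 < e n := by positivity
    nlinarith [mul_pos ha₂ hm₂]
  have hterm := alphaMu_coeff_mul_moment_eq_ratioSeriesTerm ha₁ hm₁ hb₁ ha₂ hm₂ hb₂ hx
  have hmoment_nonneg : ∀ n, 0 ≤ᵐ[volume.restrict (Ioi 0)]
      fun y => y ^ e n * alphaMuPowerPDF a₂ m₂ b₂ y := fun n =>
    (ae_restrict_iff' measurableSet_Ioi).2 (ae_of_all _ fun y (hy : 0 < y) =>
      mul_nonneg (rpow_nonneg hy.le _) (alphaMuPowerPDF_nonneg ha₂.le hm₂ hb₂ hy.le))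
  rw [setIntegral_congr_fun measurableSet_Ioi hseries, integral_tsum_mul_of_nonneg hmoment_nonneg
    (fun n => integrableOn_rpow_mul_alphaMuPowerPDF ha₂ hb₂ (he n)),
    tsum_congr hterm, tsum_mul_left]
  refine (hsum.abs.mul_left |1 / (Gamma m₁ * Gamma m₂) * ((x * b₂ / b₁) ^ (a₁ / 2)) ^ m₁|).congr
    fun n => ?_
  rw [← abs_mul, ← hterm, abs_mul, abs_of_nonneg (integral_nonneg_of_ae (hmoment_nonneg n))]

theorem ratio_cdf_series_general
    {Ω : Type*} [MeasureSpace Ω]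
    (α₁ μ₁ β₁ α₂ μ₂ β₂ : ℝ)
    (hα₁ : 0 < α₁) (hμ₁ : 0 < μ₁) (hβ₁ : 0 < β₁)
    (hα₂ : 0 < α₂) (hμ₂ : 0 < μ₂) (hβ₂ : 0 < β₂)
    (Υ₁ Υ₂ : Ω → ℝ) (hm₁ : Measurable Υ₁) (hm₂ : Measurable Υ₂)
    (hind : IndepFun Υ₁ Υ₂ ℙ)
    (hd₁ : Measure.map Υ₁ ℙ = volume.withDensity
      (fun γ => ENNReal.ofReal ((Ioi (0:ℝ)).indicator (alphaMuPowerPDF α₁ μ₁ β₁) γ)))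
    (hd₂ : Measure.map Υ₂ ℙ = volume.withDensity
      (fun γ => ENNReal.ofReal ((Ioi (0:ℝ)).indicator (alphaMuPowerPDF α₂ μ₂ β₂) γ)))
    (k : ℝ) (hk : k = α₁ / α₂) (hk1 : k ≤ 1)
    (x : ℝ) (hx : 0 < x)
    (z : ℝ) (hz : z = (x * β₂ / β₁) ^ (α₁ / 2))
    (hz1 : k = 1 → z < 1) :
    Summable (fun h : ℕ =>
      (-1 : ℝ) ^ h * z ^ h * Real.Gamma (k * (h + μ₁) + μ₂) /
        ((h + μ₁) * Real.Gamma (h + 1))) ∧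
    (ℙ {ω | Υ₁ ω / Υ₂ ω ≤ x}).toReal =
      1 / (Real.Gamma μ₁ * Real.Gamma μ₂) * z ^ μ₁ *
        ∑' h : ℕ,
          (-1 : ℝ) ^ h * z ^ h * Real.Gamma (k * (h + μ₁) + μ₂) /
            ((h + μ₁) * Real.Gamma (h + 1)) := by
  have hz0 : 0 ≤ z := hz ▸ rpow_nonneg (by positivity) _
  have hsum := summable_ratioSeriesTerm (hk ▸ (div_pos hα₁ hα₂).le) hk1 hμ₁ hμ₂ hz0 hz1
  refine ⟨hsum, ?_⟩
  subst hk hz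
  rw [hind.measureReal_div_le_eq_integral hm₁ hm₂ (integrableOn_alphaMuPowerPDF hα₁ hμ₁ hβ₁)
      (integrableOn_alphaMuPowerPDF hα₂ hμ₂ hβ₂)
      (fun u hu => alphaMuPowerPDF_nonneg hα₁.le hμ₁ hβ₁ (le_of_lt hu))
      (fun u hu => alphaMuPowerPDF_nonneg hα₂.le hμ₂ hβ₂ (le_of_lt hu)) hd₁ hd₂ x,
    integral_cdf_mul_alphaMuPowerPDF hα₁ hμ₁ hβ₁ hα₂ hμ₂ hβ₂ hx hsum]
  rfl

theorem ratio_cdf_series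
    {Ω : Type*} [MeasureSpace Ω] [IsProbabilityMeasure (ℙ : Measure Ω)]
    (α₁ μ₁ β₁ α₂ μ₂ β₂ : ℝ)
    (hα₁ : 0 < α₁) (hμ₁ : 0 < μ₁) (hβ₁ : 0 < β₁)
    (hα₂ : 0 < α₂) (hμ₂ : 0 < μ₂) (hβ₂ : 0 < β₂)
    (Υ₁ Υ₂ : Ω → ℝ) (hm₁ : Measurable Υ₁) (hm₂ : Measurable Υ₂)
    (hind : IndepFun Υ₁ Υ₂ ℙ)
    (hd₁ : Measure.map Υ₁ ℙ = volume.withDensity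
      (fun γ => ENNReal.ofReal ((Ioi (0:ℝ)).indicator (alphaMuPowerPDF α₁ μ₁ β₁) γ)))
    (hd₂ : Measure.map Υ₂ ℙ = volume.withDensity
      (fun γ => ENNReal.ofReal ((Ioi (0:ℝ)).indicator (alphaMuPowerPDF α₂ μ₂ β₂) γ)))
    (k : ℝ) (hk : k = α₁ / α₂) (hk1 : k ≤ 1)
    (x : ℝ) (hx : 0 < x)
    (z : ℝ) (hz : z = (x * β₂ / β₁) ^ (α₁ / 2))
    (hz1 : k = 1 → z < 1) :
    Summable (fun h : ℕ =>
      (-1 : ℝ) ^ h * z ^ h * Real.Gamma (k * (h + μ₁) + μ₂) /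
        ((h + μ₁) * Real.Gamma (h + 1))) ∧
    (ℙ {ω | Υ₁ ω / Υ₂ ω ≤ x}).toReal =
      1 / (Real.Gamma μ₁ * Real.Gamma μ₂) * z ^ μ₁ *
        ∑' h : ℕ,
          (-1 : ℝ) ^ h * z ^ h * Real.Gamma (k * (h + μ₁) + μ₂) /
            ((h + μ₁) * Real.Gamma (h + 1)) :=
  ratio_cdf_series_general α₁ μ₁ β₁ α₂ μ₂ β₂ hα₁ hμ₁ hβ₁ hα₂ hμ₂ hβ₂ Υ₁ Υ₂ hm₁ hm₂ hind hd₁ hd₂ k hk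
    hk1 x hx z hz hz1
end

section
/- Integral identity used in the ratio-PDF derivation: for k, a, b, c > 0 with appropriate parameters μ₁, μ₂ > 0, ∫₀^∞ w^(μ₂ + kμ₁ − 1) exp(−a w) exp(−b w^k) dw = a^(−(μ₂+kμ₁)) Σ_{h=0}^∞ (−1)^h (b a^(−k))^h Γ(k(h+μ₁)+μ₂) / h!, for k < 1 (the series converging absolutely). -/
/-!
Expand `exp (-b w ^ k)` into its power series and integrate termwise: the `h`-th term is a Gamma
integral, `∫ w ^ (s + k h - 1) exp (-a w) = Γ (s + k h) / a ^ (s + k h)`. Termwise integration and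
absolute convergence both follow from the integrability of the sum of the absolute values of the
terms, `w ^ (s - 1) exp (-a w) exp (|b| w ^ k)`, and this is where `k < 1` enters: `|b| w ^ k` grows
more slowly than `a w / 2`, so the integrand is dominated by a multiple of
`w ^ (s - 1) exp (-a w / 2)`.
-/

open MeasureTheory Real Set Filter Topology

section TermwiseIntegration

variable {α E ι : Type*} [MeasurableSpace α] {μ : Measure α} [NormedAddCommGroup E]
  {F : ι → α → E}

lemma tsum_lintegral_enorm_ne_top_of_hasSum_norm [Countable ι] {G : α → ℝ}
    (hF : ∀ i, AEStronglyMeasurable (F i) μ) (hG : Integrable G μ)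
    (hFG : ∀ᵐ x ∂μ, HasSum (fun i => ‖F i x‖) (G x)) :
    ∑' i, ∫⁻ x, ‖F i x‖ₑ ∂μ ≠ ⊤ := by
  rw [← lintegral_tsum fun i => (hF i).enorm]
  have hG_eq : ∀ᵐ x ∂μ, ∑' i, ‖F i x‖ₑ = ENNReal.ofReal (G x) := by
    filter_upwards [hFG] with x hx
    rw [← hx.tsum_eq, ENNReal.ofReal_tsum_of_nonneg (fun i => norm_nonneg _) hx.summable]
    simp only [ofReal_norm]
  rw [lintegral_congr_ae hG_eq]
  exact hG.lintegral_lt_top.ne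

lemma summable_norm_integral_of_tsum_lintegral_enorm_ne_top [NormedSpace ℝ E]
    (hF : ∑' i, ∫⁻ x, ‖F i x‖ₑ ∂μ ≠ ⊤) : Summable fun i => ‖∫ x, F i x ∂μ‖ := by
  refine (ENNReal.summable_toReal hF).of_nonneg_of_le (fun i => norm_nonneg _) fun i => ?_
  rw [← toReal_enorm]
  exact ENNReal.toReal_mono (ENNReal.ne_top_of_tsum_ne_top hF i)
    (enorm_integral_le_lintegral_enorm _)

end TermwiseIntegration

lemma summable_norm_integral_and_integral_mul_exp_eq_tsum {α : Type*} [MeasurableSpace α]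
    {μ : Measure α} {φ ψ : α → ℝ} (hφ : AEStronglyMeasurable φ μ)
    (hψ : AEStronglyMeasurable ψ μ) (hint : Integrable (fun x => φ x * exp |ψ x|) μ) :
    Summable (fun n : ℕ => ‖∫ x, φ x * (ψ x ^ n / n.factorial) ∂μ‖) ∧
      ∫ x, φ x * exp (ψ x) ∂μ = ∑' n : ℕ, ∫ x, φ x * (ψ x ^ n / n.factorial) ∂μ := by
  have hexp (y : ℝ) : HasSum (fun n : ℕ => y ^ n / n.factorial) (exp y) := by
    simpa [exp_eq_exp_ℝ] using NormedSpace.expSeries_div_hasSum_exp y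
  have hmeas (n : ℕ) : AEStronglyMeasurable (fun x => φ x * (ψ x ^ n / n.factorial)) μ := by
    fun_prop
  have hfin : ∑' n : ℕ, ∫⁻ x, ‖φ x * (ψ x ^ n / n.factorial)‖ₑ ∂μ ≠ ⊤ := by
    refine tsum_lintegral_enorm_ne_top_of_hasSum_norm hmeas hint.norm (ae_of_all _ fun x => ?_)
    simpa [norm_mul, norm_div, norm_pow, abs_exp] using (hexp |ψ x|).mul_left |φ x|
  refine ⟨summable_norm_integral_of_tsum_lintegral_enorm_ne_top hfin, ?_⟩
  rw [← integral_tsum hmeas hfin]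
  simp_rw [tsum_mul_left, (hexp _).tsum_eq]

lemma exists_mul_rpow_le_mul_add {k : ℝ} (hk0 : 0 ≤ k) (hk1 : k < 1) (b : ℝ) {c : ℝ}
    (hc : 0 < c) : ∃ C, ∀ w, 0 ≤ w → b * w ^ k ≤ c * w + C := by
  have hlim : Tendsto (fun w : ℝ => b * w ^ (k - 1)) atTop (𝓝 0) := by
    simpa [neg_sub] using (tendsto_rpow_neg_atTop (sub_pos.2 hk1)).const_mul b
  obtain ⟨R, hR⟩ := eventually_atTop.1 (hlim.eventually (gt_mem_nhds hc))
  have hC : 0 ≤ |b| * max R 1 ^ k := by positivity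
  refine ⟨|b| * max R 1 ^ k, fun w hw => ?_⟩
  rcases le_total w (max R 1) with hwR | hwR
  · calc b * w ^ k ≤ |b| * max R 1 ^ k := by gcongr; exact le_abs_self b
      _ ≤ c * w + |b| * max R 1 ^ k := le_add_of_nonneg_left (by positivity)
  · have hw0 : 0 < w := one_pos.trans_le ((le_max_right _ _).trans hwR)
    calc b * w ^ k = b * w ^ (k - 1) * w := by
          rw [mul_assoc, ← rpow_add_one hw0.ne', sub_add_cancel]
      _ ≤ c * w := by gcongr; exact (hR w ((le_max_left _ _).trans hwR)).le
      _ ≤ c * w + |b| * max R 1 ^ k := le_add_of_nonneg_right hC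

lemma integrableOn_rpow_mul_exp_neg_mul_mul_exp_mul_rpow {s a k : ℝ} (hs : 0 < s) (ha : 0 < a)
    (hk0 : 0 ≤ k) (hk1 : k < 1) (b : ℝ) :
    IntegrableOn (fun w => w ^ (s - 1) * exp (-a * w) * exp (b * w ^ k)) (Ioi 0) := by
  obtain ⟨C, hC⟩ := exists_mul_rpow_le_mul_add hk0 hk1 b (half_pos ha)
  have hmajorant :
      IntegrableOn (fun w => exp C * (w ^ (s - 1) * exp (-(a / 2) * w))) (Ioi 0) := by
    simpa [IntegrableOn] using ((integrableOn_rpow_mul_exp_neg_mul_rpow (by linarith) one_pos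
      (half_pos ha)).const_mul (exp C))
  refine hmajorant.mono' (by fun_prop) ?_
  filter_upwards [ae_restrict_mem measurableSet_Ioi] with w (hw : 0 < w)
  have hexp : exp (-a * w) * exp (b * w ^ k) ≤ exp C * exp (-(a / 2) * w) := by
    rw [← exp_add, ← exp_add, exp_le_exp]
    linarith [hC w hw.le]
  rw [norm_of_nonneg (by positivity), mul_assoc, mul_left_comm (exp C)]
  gcongr

lemma integral_rpow_mul_exp_neg_mul_mul_pow_div_factorial {s a k : ℝ} (hs : 0 < s) (ha : 0 < a)
    (hk : 0 ≤ k) (c : ℝ) (n : ℕ) :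
    ∫ w in Ioi 0, w ^ (s - 1) * exp (-a * w) * ((c * w ^ k) ^ n / n.factorial) =
      a ^ (-s) * ((c * a ^ (-k)) ^ n * Gamma (s + k * n) / n.factorial) := by
  have hintegrand : ∀ w ∈ Ioi (0 : ℝ),
      w ^ (s - 1) * exp (-a * w) * ((c * w ^ k) ^ n / n.factorial) =
        c ^ n / n.factorial * (w ^ (s + k * n - 1) * exp (-(a * w))) := fun w (hw : 0 < w) => by
    rw [add_sub_right_comm, rpow_add hw, rpow_mul hw.le, rpow_natCast, mul_pow]
    ring_nf
  have hpow : (1 / a) ^ (s + k * n) = a ^ (-s) * (a ^ (-k)) ^ n := by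
    rw [one_div, inv_rpow ha.le, ← rpow_neg ha.le, neg_add, rpow_add ha, ← rpow_natCast,
      ← rpow_mul ha.le, neg_mul]
  rw [setIntegral_congr_fun measurableSet_Ioi hintegrand, integral_const_mul,
    integral_rpow_mul_exp_neg_mul_Ioi (by positivity) ha, hpow]
  ring

theorem integral_series_identity_general
    (k μ₁ μ₂ a b : ℝ) (hk0 : 0 < k) (hk1 : k < 1)
    (hμ₁ : 0 < μ₁) (hμ₂ : 0 < μ₂) (ha : 0 < a) :
    Summable (fun h : ℕ =>
      |(-1 : ℝ) ^ h * (b * a ^ (-k)) ^ h * Real.Gamma (k * (h + μ₁) + μ₂) /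
        h.factorial|) ∧
    (∫ w in Ioi (0:ℝ),
        w ^ (μ₂ + k * μ₁ - 1) * Real.exp (-a * w) * Real.exp (-b * w ^ k)) =
      a ^ (-(μ₂ + k * μ₁)) *
        ∑' h : ℕ,
          (-1 : ℝ) ^ h * (b * a ^ (-k)) ^ h * Real.Gamma (k * (h + μ₁) + μ₂) /
            h.factorial := by
  have hs : 0 < μ₂ + k * μ₁ := by positivity
  have hterm (h : ℕ) :
      ∫ w in Ioi 0, w ^ (μ₂ + k * μ₁ - 1) * exp (-a * w) * ((-b * w ^ k) ^ h / h.factorial) =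
        a ^ (-(μ₂ + k * μ₁)) *
          ((-1) ^ h * (b * a ^ (-k)) ^ h * Gamma (k * (h + μ₁) + μ₂) / h.factorial) := by
    rw [integral_rpow_mul_exp_neg_mul_mul_pow_div_factorial hs ha hk0.le, neg_mul, neg_pow,
      show k * (h + μ₁) + μ₂ = μ₂ + k * μ₁ + k * h by ring]
  have hint : IntegrableOn
      (fun w => w ^ (μ₂ + k * μ₁ - 1) * exp (-a * w) * exp |-b * w ^ k|) (Ioi 0) :=
    (integrableOn_rpow_mul_exp_neg_mul_mul_exp_mul_rpow hs ha hk0.le hk1 |b|).congr_fun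
      (fun w (hw : 0 < w) => by rw [abs_mul, abs_neg, abs_of_nonneg (rpow_nonneg hw.le k)])
      measurableSet_Ioi
  obtain ⟨hsum, heq⟩ :=
    summable_norm_integral_and_integral_mul_exp_eq_tsum (by fun_prop) (by fun_prop) hint
  simp only [hterm, norm_mul, norm_of_nonneg (rpow_pos_of_pos ha _).le, norm_eq_abs] at hsum heq
  exact ⟨(summable_mul_left_iff (rpow_pos_of_pos ha _).ne').1 hsum, by rw [heq, tsum_mul_left]⟩

theorem integral_series_identity
    (k μ₁ μ₂ a b : ℝ) (hk0 : 0 < k) (hk1 : k < 1)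
    (hμ₁ : 0 < μ₁) (hμ₂ : 0 < μ₂) (ha : 0 < a) (hb : 0 < b) :
    Summable (fun h : ℕ =>
      |(-1 : ℝ) ^ h * (b * a ^ (-k)) ^ h * Real.Gamma (k * (h + μ₁) + μ₂) /
        h.factorial|) ∧
    (∫ w in Ioi (0:ℝ),
        w ^ (μ₂ + k * μ₁ - 1) * Real.exp (-a * w) * Real.exp (-b * w ^ k)) =
      a ^ (-(μ₂ + k * μ₁)) *
        ∑' h : ℕ,
          (-1 : ℝ) ^ h * (b * a ^ (-k)) ^ h * Real.Gamma (k * (h + μ₁) + μ₂) /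
            h.factorial :=
  integral_series_identity_general k μ₁ μ₂ a b hk0 hk1 hμ₁ hμ₂ ha
end
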